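/- arXiv:1806.03429 — 5 statements merged into one kernel-verified Lean document; each statement's English description precedes it below -/
import Mathlib

section
/- Let S ⊂ P^N be an irreducible projective variety such that dim Sec(S) = dim S + 1. Then Sec(S) is a linear subspace of P^N. -/
open MvPolynomial

noncomputable section

variable {σ : Type*}

/-- The common zero locus of a set of polynomials. -/
def zLocus (I : Set (MvPolynomial σ ℂ)) : Set (σ → ℂ) :=
  {x | ∀ f ∈ I, eval x f = 0}

/-- A set is algebraic if it is a common zero locus of polynomials. -/
def IsAlg (S : Set (σ → ℂ)) : Prop :=
  ∃ I : Set (MvPolynomial σ ℂ), S = zLocus I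

/-- Zariski closure. -/
def zcl (S : Set (σ → ℂ)) : Set (σ → ℂ) :=
  ⋂₀ {T | IsAlg T ∧ S ⊆ T}

/-- Irreducibility of a set with respect to algebraic subsets. -/
def IsIrredV (S : Set (σ → ℂ)) : Prop :=
  S.Nonempty ∧ ∀ T₁ T₂ : Set (σ → ℂ), IsAlg T₁ → IsAlg T₂ →
    S ⊆ T₁ ∪ T₂ → S ⊆ T₁ ∨ S ⊆ T₂

/-- Dimension of (the affine cone over) a variety, via chains of irreducible
algebraic subsets. For the cone over a projective variety this is
(projective dimension) + 1. -/
def adim (S : Set (σ → ℂ)) : WithBot (WithTop ℕ) :=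
  Order.krullDim {T : Set (σ → ℂ) // IsAlg T ∧ IsIrredV T ∧ T ⊆ S}

/-- `S` is (the affine cone over) a projective cone: there is a vertex `v`
such that the line through `v` and any point of `S` stays in `S`. -/
def IsConeV (S : Set (σ → ℂ)) : Prop :=
  ∃ v ∈ S, v ≠ 0 ∧ ∀ x ∈ S, ∀ a b : ℂ, a • v + b • x ∈ S

/-- Secant variety (of cones): closure of the union of lines through pairs of points. -/
def secantV (S : Set (σ → ℂ)) : Set (σ → ℂ) :=
  zcl {v | ∃ x ∈ S, ∃ y ∈ S, ∃ a b : ℂ, v = a • x + b • y}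

/-- The gradient of a polynomial at a point. -/
def gradP [Fintype σ] [DecidableEq σ] (P : MvPolynomial σ ℂ) (v : σ → ℂ) : σ → ℂ :=
  fun i => eval v (pderiv i P)

/-- The singular locus (cone) of the hypersurface defined by `P`. -/
def singLocus [Fintype σ] [DecidableEq σ] (P : MvPolynomial σ ℂ) : Set (σ → ℂ) :=
  {v | ∀ i, eval v (pderiv i P) = 0}

end

/-! `Sec(S)` lies in the span of `S`, which is a linear subspace and hence Zariski closed.
Conversely, `Sec(S)` contains `0` and is stable under translation by every multiple of every
`x ∈ S`, so it contains the span. If `x` is a vertex of `S`, the union of the secant lines is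
itself stable under these translations. Otherwise the cone over `S` with vertex `x` is stable
under them, and it is an irreducible variety with `S ⊊ Cone_x(S) ⊆ Sec(S)`; as
`dim Sec(S) = dim S + 1`, it must be all of `Sec(S)`. -/

section ZariskiClosure

variable {σ : Type*}

lemma zLocus_iUnion {ι : Sort*} (I : ι → Set (MvPolynomial σ ℂ)) :
    zLocus (⋃ i, I i) = ⋂ i, zLocus (I i) := by
  ext x
  simp only [zLocus, Set.mem_iUnion, Set.mem_iInter, Set.mem_ofPred_eq]
  grind

lemma isAlg_iInter {ι : Sort*} {T : ι → Set (σ → ℂ)} (h : ∀ i, IsAlg (T i)) :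
    IsAlg (⋂ i, T i) := by
  choose I hI using h
  exact ⟨⋃ i, I i, by rw [zLocus_iUnion]; exact Set.iInter_congr hI⟩

lemma isAlg_zcl (S : Set (σ → ℂ)) : IsAlg (zcl S) := by
  rw [zcl, Set.sInter_eq_iInter]
  exact isAlg_iInter fun T => T.2.1

lemma subset_zcl (S : Set (σ → ℂ)) : S ⊆ zcl S :=
  fun _ hx => Set.mem_sInter.2 fun _ hT => hT.2 hx

lemma zcl_subset {S T : Set (σ → ℂ)} (hT : IsAlg T) (h : S ⊆ T) : zcl S ⊆ T :=
  Set.sInter_subset_of_mem ⟨hT, h⟩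

lemma zcl_mono {S T : Set (σ → ℂ)} (h : S ⊆ T) : zcl S ⊆ zcl T :=
  zcl_subset (isAlg_zcl T) (h.trans (subset_zcl T))

lemma IsIrredV.zcl {S : Set (σ → ℂ)} (h : IsIrredV S) : IsIrredV (zcl S) := by
  refine ⟨h.1.mono (subset_zcl S), fun T₁ T₂ h₁ h₂ hsub => ?_⟩
  exact (h.2 T₁ T₂ h₁ h₂ ((subset_zcl S).trans hsub)).imp (zcl_subset h₁) (zcl_subset h₂)

lemma isAlg_singleton (v : σ → ℂ) : IsAlg ({v} : Set (σ → ℂ)) := by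
  refine ⟨Set.range fun i => X i - C (v i), Set.ext fun x => ?_⟩
  simp only [Set.mem_singleton_iff, zLocus, Set.forall_mem_range, Set.mem_ofPred_eq, map_sub,
    eval_X, eval_C, sub_eq_zero, funext_iff]

lemma isIrredV_singleton (v : σ → ℂ) : IsIrredV ({v} : Set (σ → ℂ)) :=
  ⟨Set.singleton_nonempty v, fun _ _ _ _ hsub => by simpa using hsub rfl⟩

/-- Two nonzero polynomials cannot have product vanishing everywhere. -/
lemma isIrredV_univ : IsIrredV (Set.univ : Set (σ → ℂ)) := by
  refine ⟨Set.univ_nonempty, ?_⟩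
  rintro _ _ ⟨I₁, rfl⟩ ⟨I₂, rfl⟩ hsub
  by_contra! h
  simp only [Set.univ_subset_iff, Set.ne_univ_iff_exists_notMem, zLocus, Set.mem_ofPred_eq,
    not_forall] at h
  obtain ⟨⟨v₁, f₁, hf₁, hv₁⟩, ⟨v₂, f₂, hf₂, hv₂⟩⟩ := h
  have hprod : f₁ * f₂ = 0 := MvPolynomial.funext fun w => by
    rcases hsub (Set.mem_univ w) with hw | hw
    · simp [hw _ hf₁]
    · simp [hw _ hf₂]
  rcases mul_eq_zero.1 hprod with rfl | rfl
  · exact hv₁ (map_zero _)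
  · exact hv₂ (map_zero _)

end ZariskiClosure

section PolynomialMaps

variable {σ τ : Type*}

noncomputable def polyMap (F : τ → MvPolynomial σ ℂ) (x : σ → ℂ) : τ → ℂ :=
  fun j => eval x (F j)

lemma eval_polyMap (F : τ → MvPolynomial σ ℂ) (x : σ → ℂ) (f : MvPolynomial τ ℂ) :
    eval (polyMap F x) f = eval x (bind₁ F f) := by
  simp only [eval, eval₂Hom_bind₁]
  rfl

lemma IsAlg.preimage_polyMap (F : τ → MvPolynomial σ ℂ) {T : Set (τ → ℂ)} (hT : IsAlg T) :
    IsAlg (polyMap F ⁻¹' T) := by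
  obtain ⟨I, rfl⟩ := hT
  refine ⟨bind₁ F '' I, Set.ext fun x => ?_⟩
  simp [zLocus, eval_polyMap]

lemma IsIrredV.image_polyMap (F : τ → MvPolynomial σ ℂ) {A : Set (σ → ℂ)} (h : IsIrredV A) :
    IsIrredV (polyMap F '' A) := by
  refine ⟨h.1.image _, fun T₁ T₂ h₁ h₂ hsub => ?_⟩
  simp only [Set.image_subset_iff, Set.preimage_union] at hsub ⊢
  exact h.2 _ _ (h₁.preimage_polyMap F) (h₂.preimage_polyMap F) hsub

lemma Set.MapsTo.zcl_polyMap {F : τ → MvPolynomial σ ℂ} {A : Set (σ → ℂ)} {B : Set (τ → ℂ)}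
    (h : Set.MapsTo (polyMap F) A B) : Set.MapsTo (polyMap F) (zcl A) (zcl B) :=
  zcl_subset ((isAlg_zcl B).preimage_polyMap F) (h.mono_right (subset_zcl B))

lemma Set.MapsTo.zcl_add {T : Set (σ → ℂ)} {w : σ → ℂ} (h : Set.MapsTo (· + w) T T) :
    Set.MapsTo (· + w) (zcl T) (zcl T) := by
  have hpoly : polyMap (fun i => X i + C (w i)) = (· + w) := by
    ext u i
    simp [polyMap]
  rw [← hpoly] at h ⊢
  exact h.zcl_polyMap

lemma polyMap_sumElim_left (y : τ → ℂ) :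
    polyMap (Sum.elim X (fun j => C (y j)) : σ ⊕ τ → MvPolynomial σ ℂ) = (Sum.elim · y) := by
  ext x (i | j) <;> simp [polyMap]

lemma polyMap_sumElim_right (x : σ → ℂ) :
    polyMap (Sum.elim (fun i => C (x i)) X : σ ⊕ τ → MvPolynomial τ ℂ) = Sum.elim x := by
  ext y (i | j) <;> simp [polyMap]

def sProd (A : Set (σ → ℂ)) (B : Set (τ → ℂ)) : Set (σ ⊕ τ → ℂ) :=
  {w | w ∘ Sum.inl ∈ A ∧ w ∘ Sum.inr ∈ B}

/-- Each slice `A × {y}` lies in `T₁` or in `T₂`; the set of `y` whose slice lies in `Tᵢ` is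
algebraic, being an intersection of preimages of `Tᵢ` under the maps `y ↦ (x, y)`. -/
lemma IsIrredV.sProd {A : Set (σ → ℂ)} {B : Set (τ → ℂ)} (hA : IsIrredV A) (hB : IsIrredV B) :
    IsIrredV (sProd A B) := by
  obtain ⟨⟨a, ha⟩, hA⟩ := hA
  obtain ⟨⟨b, hb⟩, hB⟩ := hB
  refine ⟨⟨Sum.elim a b, ha, hb⟩, fun T₁ T₂ h₁ h₂ hsub => ?_⟩
  let slices (T : Set (σ ⊕ τ → ℂ)) : Set (τ → ℂ) := {y | ∀ x ∈ A, Sum.elim x y ∈ T}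
  have slices_isAlg {T} (hT : IsAlg T) : IsAlg (slices T) := by
    have : slices T = ⋂ x ∈ A, polyMap (Sum.elim (fun i => C (x i)) X) ⁻¹' T := by
      ext y; simp [slices, polyMap_sumElim_right]
    rw [this]
    exact isAlg_iInter fun x => isAlg_iInter fun _ => hT.preimage_polyMap _
  have hB_sub : B ⊆ slices T₁ ∪ slices T₂ := fun y hy => by
    have hA_sub : A ⊆ (Sum.elim · y) ⁻¹' T₁ ∪ (Sum.elim · y) ⁻¹' T₂ :=
      fun x hx => hsub ⟨hx, hy⟩
    rw [← polyMap_sumElim_left] at hA_sub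
    exact (hA _ _ (h₁.preimage_polyMap _) (h₂.preimage_polyMap _) hA_sub).imp
      (fun h x hx => by simpa [polyMap_sumElim_left] using h hx)
      (fun h x hx => by simpa [polyMap_sumElim_left] using h hx)
  have of_slices {T} (hT : B ⊆ slices T) : _root_.sProd A B ⊆ T := fun w ⟨hw₁, hw₂⟩ => by
    simpa using hT hw₂ _ hw₁
  exact (hB _ _ (slices_isAlg h₁) (slices_isAlg h₂) hB_sub).imp of_slices of_slices

end PolynomialMaps

section Dimension

variable {σ : Type*}

lemma IsAlg.zLocus_vanishingIdeal {T : Set (σ → ℂ)} (hT : IsAlg T) :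
    zLocus (vanishingIdeal ℂ T : Set (MvPolynomial σ ℂ)) = T := by
  obtain ⟨I, rfl⟩ := hT
  exact subset_antisymm (fun x hx f hf => hx f fun y hy => hy f hf)
    (fun x hx f hf => (mem_vanishingIdeal_iff.1 hf) x hx)

lemma IsIrredV.vanishingIdeal_isPrime {T : Set (σ → ℂ)} (hT : IsIrredV T) :
    (vanishingIdeal ℂ T : Ideal (MvPolynomial σ ℂ)).IsPrime := by
  obtain ⟨⟨a, ha⟩, hT⟩ := hT
  refine ⟨(Ideal.ne_top_iff_one _).2 fun h => by simpa using mem_vanishingIdeal_iff.1 h a ha,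
    fun {f g} hfg => ?_⟩
  have hsub : T ⊆ zLocus {f} ∪ zLocus {g} := fun x hx => by
    simpa [zLocus] using mem_vanishingIdeal_iff.1 hfg x hx
  exact (hT _ _ ⟨_, rfl⟩ ⟨_, rfl⟩ hsub).imp
    (fun h => mem_vanishingIdeal_iff.2 fun x hx => h hx f rfl)
    (fun h => mem_vanishingIdeal_iff.2 fun x hx => h hx g rfl)

/-- Irreducible algebraic subsets of `A` embed order-reversingly into the prime spectrum of the
polynomial ring, whose Krull dimension is the number of variables. -/
lemma adim_le_card [Finite σ] (A : Set (σ → ℂ)) : adim A ≤ Nat.card σ := by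
  let P := {T : Set (σ → ℂ) // IsAlg T ∧ IsIrredV T ∧ T ⊆ A}
  let f : P → (PrimeSpectrum (MvPolynomial σ ℂ))ᵒᵈ := fun T =>
    OrderDual.toDual ⟨vanishingIdeal ℂ T.1, T.2.2.1.vanishingIdeal_isPrime⟩
  have hf : StrictMono f := fun T T' hlt => by
    refine (vanishingIdeal_anti_mono hlt.le).lt_of_ne fun heq => hlt.ne (Subtype.ext ?_)
    rw [← T.2.1.zLocus_vanishingIdeal, ← T'.2.1.zLocus_vanishingIdeal]
    exact congrArg (fun I : Ideal _ => zLocus (I : Set (MvPolynomial σ ℂ))) heq.symm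
  refine (Order.krullDim_le_of_strictMono f hf).trans_eq ?_
  rw [Order.krullDim_orderDual, ← ringKrullDim, MvPolynomial.ringKrullDim_of_isNoetherianRing,
    ringKrullDim_eq_zero_of_field, zero_add]
  rfl

lemma exists_adim_eq_natCast [Finite σ] {A : Set (σ → ℂ)} (hA : A.Nonempty) :
    ∃ n : ℕ, adim A = n := by
  obtain ⟨a, ha⟩ := hA
  have : Nonempty {T : Set (σ → ℂ) // IsAlg T ∧ IsIrredV T ∧ T ⊆ A} :=
    ⟨⟨{a}, isAlg_singleton a, isIrredV_singleton a, Set.singleton_subset_iff.2 ha⟩⟩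
  obtain ⟨m, hm⟩ := WithBot.ne_bot_iff_exists.1 (ne_bot_of_le_ne_bot WithBot.zero_ne_bot
    (Order.krullDim_nonneg (α := {T : Set (σ → ℂ) // IsAlg T ∧ IsIrredV T ∧ T ⊆ A})))
  have hm_le : m ≤ Nat.card σ := WithBot.coe_le_coe.1 (hm.trans_le (adim_le_card A))
  obtain ⟨n, rfl⟩ := ENat.ne_top_iff_exists.1 (ne_top_of_le_ne_top (ENat.natCast_ne_top _) hm_le)
  exact ⟨n, hm.symm⟩

lemma adim_add_one_le {A B : Set (σ → ℂ)} (hB : IsAlg B) (hB' : IsIrredV B) (hAB : A ⊂ B) :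
    adim A + 1 ≤ adim B := by
  let PA := {T : Set (σ → ℂ) // IsAlg T ∧ IsIrredV T ∧ T ⊆ A}
  let PB := {T : Set (σ → ℂ) // IsAlg T ∧ IsIrredV T ∧ T ⊆ B}
  change Order.krullDim PA + 1 ≤ Order.krullDim PB
  rcases isEmpty_or_nonempty PA with hA | hA
  · rw [Order.krullDim_eq_bot, WithBot.bot_add]
    exact bot_le
  let g : WithTop PA → PB := fun t => t.recTopCoe ⟨B, hB, hB', subset_rfl⟩
    fun T => ⟨T.1, T.2.1, T.2.2.1, T.2.2.2.trans hAB.subset⟩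
  have hg : StrictMono g := WithTop.strictMono_iff.2
    ⟨fun _ _ h => h, fun T => show T.1 < B from hAB.trans_le' T.2.2.2⟩
  rw [← Order.krullDim_WithTop]
  exact Order.krullDim_le_of_strictMono g hg

lemma eq_of_ssubset_of_adim_eq_add_one [Finite σ] {A B C : Set (σ → ℂ)} (hA : A.Nonempty)
    (hB : IsAlg B) (hB' : IsIrredV B) (hC : IsAlg C) (hC' : IsIrredV C) (hAB : A ⊂ B)
    (hBC : B ⊆ C) (hdim : adim C = adim A + 1) : B = C := by
  by_contra hne
  obtain ⟨n, hn⟩ := exists_adim_eq_natCast hA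
  have hchain : adim A + 1 + 1 ≤ adim C :=
    (add_le_add_left (adim_add_one_le hB hB' hAB) 1).trans
      (adim_add_one_le hC hC' (hBC.ssubset_of_ne hne))
  rw [hdim, hn] at hchain
  change ((n : ℕ∞) : WithBot ℕ∞) + 1 + 1 ≤ (n : ℕ∞) + 1 at hchain
  norm_cast at hchain
  omega

end Dimension

section Linear

variable {σ : Type*}

lemma exists_eval_eq_dual [Fintype σ] (ℓ : Module.Dual ℂ (σ → ℂ)) :
    ∃ f : MvPolynomial σ ℂ, ∀ u, eval u f = ℓ u := by
  classical
  refine ⟨∑ i, C (ℓ fun j => if i = j then 1 else 0) * X i, fun u => ?_⟩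
  simp [LinearMap.pi_apply_eq_sum_univ ℓ u, mul_comm]

/-- A subspace is cut out by the linear forms vanishing on it. -/
lemma isAlg_submodule [Fintype σ] (W : Submodule ℂ (σ → ℂ)) : IsAlg (W : Set (σ → ℂ)) := by
  choose poly hpoly using exists_eval_eq_dual (σ := σ)
  refine ⟨poly '' W.dualAnnihilator, Set.ext fun u => ?_⟩
  conv_lhs => rw [SetLike.mem_coe, ← Subspace.dualAnnihilator_dualCoannihilator_eq (W := W),
    Submodule.mem_dualCoannihilator]
  simp only [zLocus, Set.forall_mem_image, hpoly, Set.mem_ofPred_eq, SetLike.mem_coe]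

variable {R M : Type*} [Semiring R] [AddCommMonoid M] [Module R M]

lemma span_subset_of_mapsTo_add_smul {S T : Set M} (h0 : 0 ∈ T)
    (h : ∀ x ∈ S, ∀ c : R, Set.MapsTo (· + c • x) T T) : (Submodule.span R S : Set M) ⊆ T := by
  intro u hu
  suffices ∀ t ∈ T, t + u ∈ T by simpa using this 0 h0
  induction hu using Submodule.closure_induction with
  | zero => simp
  | add x y _ _ hx hy => exact fun t ht => add_assoc t x y ▸ hy _ (hx t ht)
  | smul_mem c x hx => exact fun t ht => h x hx c ht

end Linear

section Secant

variable {σ : Type*}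

def linearJoin (A B : Set (σ → ℂ)) : Set (σ → ℂ) :=
  {v | ∃ x ∈ A, ∃ y ∈ B, ∃ a b : ℂ, v = a • x + b • y}

lemma secantV_eq_zcl_linearJoin (S : Set (σ → ℂ)) : secantV S = zcl (linearJoin S S) := rfl

lemma linearJoin_mono_left {A A' B : Set (σ → ℂ)} (h : A ⊆ A') :
    linearJoin A B ⊆ linearJoin A' B := by
  rintro _ ⟨x, hx, y, hy, a, b, rfl⟩
  exact ⟨x, h hx, y, hy, a, b, rfl⟩

/-- The join is the image of `A × B × ℂ²` under `(x, y, a, b) ↦ a x + b y`. -/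
lemma IsIrredV.linearJoin {A B : Set (σ → ℂ)} (hA : IsIrredV A) (hB : IsIrredV B) :
    IsIrredV (linearJoin A B) := by
  let F : σ → MvPolynomial ((σ ⊕ σ) ⊕ Fin 2) ℂ := fun i =>
    X (.inl (.inl i)) * X (.inr 0) + X (.inl (.inr i)) * X (.inr 1)
  have himage : _root_.linearJoin A B = polyMap F '' _root_.sProd (_root_.sProd A B) Set.univ := by
    ext v
    constructor
    · rintro ⟨x, hx, y, hy, a, b, rfl⟩
      refine ⟨Sum.elim (Sum.elim x y) ![a, b], ⟨⟨hx, hy⟩, trivial⟩, ?_⟩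
      ext i
      simp [F, polyMap, mul_comm]
    · rintro ⟨w, ⟨⟨hx, hy⟩, -⟩, rfl⟩
      refine ⟨_, hx, _, hy, w (.inr 0), w (.inr 1), ?_⟩
      ext i
      simp [F, polyMap, mul_comm]
  rw [himage]
  exact ((hA.sProd hB).sProd isIrredV_univ).image_polyMap F

variable [Finite σ] {S : Set (σ → ℂ)}

lemma secantV_mapsTo_add_smul (hS : IsIrredV S) (hdim : adim (secantV S) = adim S + 1)
    {x : σ → ℂ} (hx : x ∈ S) (c : ℂ) : Set.MapsTo (· + c • x) (secantV S) (secantV S) := by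
  by_cases hvertex : ∀ s ∈ S, ∀ a b : ℂ, a • x + b • s ∈ S
  · rw [secantV_eq_zcl_linearJoin]
    refine Set.MapsTo.zcl_add ?_
    rintro _ ⟨y, hy, z, hz, a, b, rfl⟩
    exact ⟨c • x + a • y, hvertex y hy c a, z, hz, 1, b, by module⟩
  push Not at hvertex
  obtain ⟨s, hs, a, b, hnot⟩ := hvertex
  have hcone : zcl (linearJoin {x} S) = secantV S := by
    refine eq_of_ssubset_of_adim_eq_add_one hS.1 (isAlg_zcl _)
      ((isIrredV_singleton x).linearJoin hS).zcl (isAlg_zcl _) (hS.linearJoin hS).zcl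
      ⟨fun y hy => subset_zcl _ ⟨x, rfl, y, hy, 0, 1, by simp⟩,
        fun hsub => hnot (hsub (subset_zcl _ ⟨x, rfl, s, hs, a, b, rfl⟩))⟩
      (zcl_mono (linearJoin_mono_left (Set.singleton_subset_iff.2 hx))) hdim
  rw [← hcone]
  refine Set.MapsTo.zcl_add ?_
  rintro _ ⟨x, rfl, y, hy, a, b, rfl⟩
  exact ⟨x, rfl, y, hy, a + c, b, by module⟩

end Secant

theorem stmt1_general {N : ℕ} (S : Set (Fin (N + 1) → ℂ))
    (hirr : IsIrredV S)
    (hdim : adim (secantV S) = adim S + 1) :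
    ∃ W : Submodule ℂ (Fin (N + 1) → ℂ), secantV S = ↑W := by
  refine ⟨Submodule.span ℂ S, subset_antisymm ?_ ?_⟩
  · refine zcl_subset (isAlg_submodule _) ?_
    rintro _ ⟨x, hx, y, hy, a, b, rfl⟩
    exact add_mem (Submodule.smul_mem _ a (Submodule.subset_span hx))
      (Submodule.smul_mem _ b (Submodule.subset_span hy))
  · obtain ⟨x, hx⟩ := hirr.1
    exact span_subset_of_mapsTo_add_smul (subset_zcl _ ⟨x, hx, x, hx, 0, 0, by simp⟩)
      fun y hy c => secantV_mapsTo_add_smul hirr hdim hy c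

/-- an irreducible projective variety whose secant variety has
dimension `dim S + 1` has a linear secant variety. (Stated for affine cones:
cone dimensions also differ by one.) -/
theorem stmt1 {N : ℕ} (S : Set (Fin (N + 1) → ℂ))
    (halg : IsAlg S) (hirr : IsIrredV S)
    (hcone : ∀ c : ℂ, ∀ v ∈ S, c • v ∈ S) (h0 : ∃ v ∈ S, v ≠ 0)
    (hdim : adim (secantV S) = adim S + 1) :
    ∃ W : Submodule ℂ (Fin (N + 1) → ℂ), secantV S = ↑W :=
  stmt1_general S hirr hdim
end

section
/- Let X ⊂ P^N be a cubic hypersurface, s_1, s_2 ∈ Sing(X), and l_1 ⊂ X a line with s_1 ∈ l_1 and s_2 ∉ l_1. Let M = ⟨l_1, s_2⟩ be the 2-plane spanned by l_1 and s_2, and assume M ⊄ X. Then either (i) X ∩ M is set-theoretically equal to ⟨s_1 s_2⟩ ∪ l_1 and Sing(X ∩ M) = ⟨s_1 s_2⟩, or (ii) there is a line l_2 ⊂ M with s_2 ∈ l_2, s_1 ∉ l_2, such that X ∩ M = ⟨s_1 s_2⟩ ∪ l_1 ∪ l_2 and Sing(X ∩ M) = {s_1, s_2, l_1 ∩ l_2}.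 -/
open MvPolynomial

/-! In the coordinates `(a, b, c) ↦ a • s₁ + b • p + c • s₂` on `M`, the section `X ∩ M` is the
plane cubic `Q = P ∘ L`. As `Q` vanishes on the line `c = 0` (that is `l₁`) and is singular at
`(1 : 0 : 0)` and `(0 : 0 : 1)`, eight of its ten coefficients vanish and `Q = b c (β a + γ b)`,
where `(β, γ) ≠ 0` because `M ⊄ X`. If `β = 0` this is the double line `b = 0` (that is `⟨s₁ s₂⟩`)
together with `l₁`; otherwise it is the triangle formed by `⟨s₁ s₂⟩`, `l₁` and the line
`l₂ : β a + γ b = 0` through `s₂`, whose singular points are its vertices `s₁`, `s₂` and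
`q = (γ, -β, 0)`. -/

open Submodule

namespace MvPolynomial

theorem pderiv_aeval {R σ ι : Type*} [CommRing R] [Fintype σ] [DecidableEq σ]
    (g : σ → MvPolynomial ι R) (P : MvPolynomial σ R) (j : ι) :
    pderiv j (aeval g P) = ∑ i, aeval g (pderiv i P) * pderiv j (g i) := by
  induction P using MvPolynomial.induction_on with
  | C a => simp
  | add p q hp hq => simp only [map_add, hp, hq, add_mul, Finset.sum_add_distrib]
  | mul_X p i hp =>
    simp only [map_mul, aeval_X, Derivation.leibniz, smul_eq_mul, pderiv_X, Pi.single_apply,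
      map_add, hp, mul_ite, mul_one, mul_zero, apply_ite (aeval g), map_zero, ite_mul, zero_mul,
      add_mul, Finset.sum_add_distrib, Finset.sum_ite_eq, Finset.mem_univ, if_true, Finset.mul_sum]
    simp only [mul_assoc]

section LinearSubst

variable {R σ ι : Type*} [CommRing R] [Fintype ι] [DecidableEq ι] (L : (ι → R) →ₗ[R] σ → R)

theorem _root_.LinearMap.pi_apply_eq_sum_mul_single (v : ι → R) (i : σ) :
    L v i = ∑ j, v j * L (Pi.single j 1) i := by
  conv_lhs => rw [pi_eq_sum_univ' v]
  simp [Finset.sum_apply]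

/-- The polynomial `P ∘ L`. -/
noncomputable def linearSubst (P : MvPolynomial σ R) : MvPolynomial ι R :=
  aeval (fun i => ∑ j, C (L (Pi.single j 1) i) * X j) P

theorem eval_linearSubst (v : ι → R) (P : MvPolynomial σ R) :
    eval v (linearSubst L P) = eval (L v) P := by
  rw [linearSubst, aeval_def, algebraMap_eq, ← eval_assoc]
  refine congr_arg (fun x => eval x P) (_root_.funext fun i => ?_)
  rw [L.pi_apply_eq_sum_mul_single v i]
  simp [mul_comm]

theorem IsHomogeneous.linearSubst {P : MvPolynomial σ R} {n : ℕ} (hP : P.IsHomogeneous n) :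
    (linearSubst L P).IsHomogeneous n := by
  rw [MvPolynomial.linearSubst]
  simpa only [one_mul] using
    hP.aeval _ fun i => IsHomogeneous.sum Finset.univ _ _ fun j _ => isHomogeneous_C_mul_X _ j

variable [Fintype σ] [DecidableEq σ]

theorem eval_pderiv_linearSubst (v : ι → R) (P : MvPolynomial σ R) (j : ι) :
    eval v (pderiv j (linearSubst L P)) = ∑ i, L (Pi.single j 1) i * eval (L v) (pderiv i P) := by
  rw [linearSubst, pderiv_aeval, map_sum]
  refine Finset.sum_congr rfl fun i _ => ?_
  rw [map_mul, ← linearSubst, eval_linearSubst]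
  simp [pderiv_X, Pi.single_apply, mul_comm]

theorem sum_mul_eval_pderiv_linearSubst (v w : ι → R) (P : MvPolynomial σ R) :
    ∑ i, L w i * eval (L v) (pderiv i P) = ∑ j, w j * eval v (pderiv j (linearSubst L P)) := by
  simp_rw [eval_pderiv_linearSubst, L.pi_apply_eq_sum_mul_single w, Finset.mul_sum, Finset.sum_mul]
  rw [Finset.sum_comm]
  simp_rw [mul_assoc]

end LinearSubst

section TernaryCubic

variable {R : Type*} [CommRing R]

noncomputable def ternaryExp (i j k : ℕ) : Fin 3 →₀ ℕ :=
  Finsupp.single 0 i + Finsupp.single 1 j + Finsupp.single 2 k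

theorem ternaryExp_eq_iff {i j k i' j' k' : ℕ} :
    ternaryExp i j k = ternaryExp i' j' k' ↔ i = i' ∧ j = j' ∧ k = k' := by
  refine ⟨fun h => ?_, by rintro ⟨rfl, rfl, rfl⟩; rfl⟩
  have h₀ := DFunLike.congr_fun h 0
  have h₁ := DFunLike.congr_fun h 1
  have h₂ := DFunLike.congr_fun h 2
  simp only [ternaryExp, Finsupp.add_apply, Finsupp.single_apply] at h₀ h₁ h₂
  simp_all

theorem monomial_ternaryExp (i j k : ℕ) (c : R) :
    monomial (ternaryExp i j k) c = C c * X 0 ^ i * X 1 ^ j * X 2 ^ k := by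
  rw [ternaryExp, monomial_add_single, monomial_add_single, ← zero_add (Finsupp.single 0 i),
    monomial_add_single, C_apply]

theorem eq_ternaryExp (d : Fin 3 →₀ ℕ) : d = ternaryExp (d 0) (d 1) (d 2) := by
  ext l; fin_cases l <;> simp [ternaryExp]

theorem IsHomogeneous.exists_eq_ternary_cubic {Q : MvPolynomial (Fin 3) R}
    (hQ : Q.IsHomogeneous 3) :
    ∃ c₃₀₀ c₂₁₀ c₂₀₁ c₁₂₀ c₁₁₁ c₁₀₂ c₀₃₀ c₀₂₁ c₀₁₂ c₀₀₃ : R, Q =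
      C c₃₀₀ * X 0 ^ 3 + C c₂₁₀ * X 0 ^ 2 * X 1 + C c₂₀₁ * X 0 ^ 2 * X 2
      + C c₁₂₀ * X 0 * X 1 ^ 2 + C c₁₁₁ * X 0 * X 1 * X 2 + C c₁₀₂ * X 0 * X 2 ^ 2
      + C c₀₃₀ * X 1 ^ 3 + C c₀₂₁ * X 1 ^ 2 * X 2 + C c₀₁₂ * X 1 * X 2 ^ 2 + C c₀₀₃ * X 2 ^ 3 := by
  have key : Q = monomial (ternaryExp 3 0 0) (coeff (ternaryExp 3 0 0) Q)
      + monomial (ternaryExp 2 1 0) (coeff (ternaryExp 2 1 0) Q)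
      + monomial (ternaryExp 2 0 1) (coeff (ternaryExp 2 0 1) Q)
      + monomial (ternaryExp 1 2 0) (coeff (ternaryExp 1 2 0) Q)
      + monomial (ternaryExp 1 1 1) (coeff (ternaryExp 1 1 1) Q)
      + monomial (ternaryExp 1 0 2) (coeff (ternaryExp 1 0 2) Q)
      + monomial (ternaryExp 0 3 0) (coeff (ternaryExp 0 3 0) Q)
      + monomial (ternaryExp 0 2 1) (coeff (ternaryExp 0 2 1) Q)
      + monomial (ternaryExp 0 1 2) (coeff (ternaryExp 0 1 2) Q)
      + monomial (ternaryExp 0 0 3) (coeff (ternaryExp 0 0 3) Q) := by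
    ext d
    rw [eq_ternaryExp d]
    generalize d 0 = a, d 1 = b, d 2 = c
    simp only [coeff_add, coeff_monomial, ternaryExp_eq_iff]
    by_cases h : a + b + c = 3
    · obtain rfl : c = 3 - a - b := by omega
      have : a ≤ 3 := by omega
      have : b ≤ 3 := by omega
      interval_cases a <;> interval_cases b <;> simp_all
    · rw [hQ.coeff_eq_zero (by simpa [ternaryExp, Finsupp.degree_single] using h)]
      simp (disch := omega) only [if_neg]
      simp
  simp only [monomial_ternaryExp, pow_zero, pow_one, mul_one] at key
  exact ⟨_, _, _, _, _, _, _, _, _, _, key⟩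

noncomputable def threeLines {K : Type*} [Field K] (β γ : K) : MvPolynomial (Fin 3) K :=
  X 1 * X 2 * (C β * X 0 + C γ * X 1)

/- Vanishing on `c = 0` kills the monomials free of `c`, singularity at `(1 : 0 : 0)` kills
`a² b` and `a² c`, and singularity at `(0 : 0 : 1)` kills `a c²`, `b c²` and `c³`. -/
theorem IsHomogeneous.exists_eq_threeLines {K : Type*} [Field K] [CharZero K]
    {Q : MvPolynomial (Fin 3) K} (hQ : Q.IsHomogeneous 3)
    (hline : ∀ a b : K, eval ![a, b, 0] Q = 0)
    (hsing₀ : ∀ j, eval ![1, 0, 0] (pderiv j Q) = 0)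
    (hsing₂ : ∀ j, eval ![0, 0, 1] (pderiv j Q) = 0) :
    ∃ β γ : K, Q = threeLines β γ := by
  obtain ⟨c₃₀₀, c₂₁₀, c₂₀₁, c₁₂₀, c₁₁₁, c₁₀₂, c₀₃₀, c₀₂₁, c₀₁₂, c₀₀₃, rfl⟩ :=
    hQ.exists_eq_ternary_cubic
  have e₁ := hline 1 0
  have e₂ := hline 0 1
  have e₃ := hline 1 1
  have e₄ := hsing₀ 1
  have e₅ := hsing₀ 2
  have e₆ := hsing₂ 0
  have e₇ := hsing₂ 1
  have e₈ := hsing₂ 2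
  simp [pderiv_X] at e₁ e₂ e₃ e₄ e₅ e₆ e₇ e₈
  subst e₁ e₂ e₄ e₅ e₆ e₇ e₈
  simp only [zero_add, add_zero] at e₃
  subst e₃
  refine ⟨c₁₁₁, c₀₂₁, ?_⟩
  simp only [threeLines, C_0, zero_mul, zero_add, add_zero]
  ring

end TernaryCubic

section Transport

variable {R σ ι : Type*} [CommRing R] [Fintype ι] [DecidableEq ι] (L : (ι → R) →ₗ[R] σ → R)
  (P : MvPolynomial σ R)

theorem zeroSet_range_eq_image :
    {m ∈ (LinearMap.range L : Set (σ → R)) | eval m P = 0} =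
      L '' {v | eval v (linearSubst L P) = 0} := by
  ext m
  constructor
  · rintro ⟨⟨v, rfl⟩, hm⟩
    exact ⟨v, by rwa [Set.mem_ofPred_eq, eval_linearSubst], rfl⟩
  · rintro ⟨v, hv, rfl⟩
    exact ⟨⟨v, rfl⟩, by rwa [Set.mem_ofPred_eq, eval_linearSubst] at hv⟩

theorem singularSet_range_eq_image [Fintype σ] [DecidableEq σ] :
    {m ∈ (LinearMap.range L : Set (σ → R)) |
        ∀ w ∈ LinearMap.range L, ∑ i, w i * eval m (pderiv i P) = 0} =
      L '' {v | ∀ j, eval v (pderiv j (linearSubst L P)) = 0} := by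
  ext m
  constructor
  · rintro ⟨⟨v, rfl⟩, hm⟩
    refine ⟨v, fun j => ?_, rfl⟩
    simpa [sum_mul_eval_pderiv_linearSubst, Pi.single_apply] using hm _ ⟨Pi.single j 1, rfl⟩
  · rintro ⟨v, hv, rfl⟩
    refine ⟨⟨v, rfl⟩, ?_⟩
    rintro _ ⟨w, rfl⟩
    rw [sum_mul_eval_pderiv_linearSubst]
    exact Finset.sum_eq_zero fun j _ => by rw [hv j, mul_zero]

end Transport

end MvPolynomial

section Coordinates

variable {K V W : Type*} [Field K] [AddCommGroup V] [Module K V] [AddCommGroup W] [Module K W]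

theorem LinearIndependent.triple_of_notMem_span {x y z : V} (hxy : LinearIndependent K ![x, y])
    (hz : z ∉ span K {x, y}) : LinearIndependent K ![x, y, z] := by
  have : ![x, y, z] = Fin.snoc ![x, y] z := by ext i; fin_cases i <;> rfl
  rw [this, linearIndependent_finSnoc]
  refine ⟨hxy, ?_⟩
  simpa [Matrix.range_cons, Set.pair_comm] using hz

theorem exists_injective_linearMap_fin_three {x y z : V} (h : LinearIndependent K ![x, y, z]) :
    ∃ L : (Fin 3 → K) →ₗ[K] V, Function.Injective L ∧
      L ![1, 0, 0] = x ∧ L ![0, 1, 0] = y ∧ L ![0, 0, 1] = z := by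
  refine ⟨Fintype.linearCombination K ![x, y, z], h.fintypeLinearCombination_injective, ?_⟩
  simp [Fintype.linearCombination_apply, Fin.sum_univ_three]

theorem coe_span_pair_map (L : W →ₗ[K] V) (a b : W) :
    (span K {L a, L b} : Set V) = L '' span K {a, b} := by
  rw [← Set.image_pair, span_image, map_coe]

theorem coe_span_singleton_map (L : W →ₗ[K] V) (a : W) :
    (span K {L a} : Set V) = L '' span K {a} := by
  rw [← Set.image_singleton, span_image, map_coe]

theorem span_fin_three_eq_range (L : (Fin 3 → K) →ₗ[K] V) :
    span K {L ![1, 0, 0], L ![0, 1, 0], L ![0, 0, 1]} = LinearMap.range L := by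
  rw [← Set.image_pair, ← Set.image_insert_eq, span_image, LinearMap.range_eq_map]
  congr 1
  refine eq_top_iff'.mpr fun v => ?_
  have hv : v = v 0 • ![1, 0, 0] + v 1 • ![0, 1, 0] + v 2 • ![0, 0, 1] := by
    ext i; fin_cases i <;> simp
  rw [hv]
  refine add_mem (add_mem ?_ ?_) ?_ <;> refine smul_mem _ _ (subset_span ?_) <;> simp

end Coordinates

section PlaneGeometry

open MvPolynomial

variable {K : Type*} [Field K]

theorem mem_span_e₀_e₂ {v : Fin 3 → K} : v ∈ span K {![1, 0, 0], ![0, 0, 1]} ↔ v 1 = 0 := by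
  refine ⟨fun h => ?_, fun h => mem_span_pair.mpr ⟨v 0, v 2, ?_⟩⟩
  · obtain ⟨a, b, rfl⟩ := mem_span_pair.mp h
    simp
  · ext i; fin_cases i <;> simp [h]

theorem mem_span_e₀_e₁ {v : Fin 3 → K} : v ∈ span K {![1, 0, 0], ![0, 1, 0]} ↔ v 2 = 0 := by
  refine ⟨fun h => ?_, fun h => mem_span_pair.mpr ⟨v 0, v 1, ?_⟩⟩
  · obtain ⟨a, b, rfl⟩ := mem_span_pair.mp h
    simp
  · ext i; fin_cases i <;> simp [h]

theorem mem_span_e₀ {v : Fin 3 → K} : v ∈ span K {![1, 0, 0]} ↔ v 1 = 0 ∧ v 2 = 0 := by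
  refine ⟨fun h => ?_, fun h => mem_span_singleton.mpr ⟨v 0, ?_⟩⟩
  · obtain ⟨a, rfl⟩ := mem_span_singleton.mp h
    simp
  · ext i; fin_cases i <;> simp [h]

theorem mem_span_e₂ {v : Fin 3 → K} : v ∈ span K {![0, 0, 1]} ↔ v 0 = 0 ∧ v 1 = 0 := by
  refine ⟨fun h => ?_, fun h => mem_span_singleton.mpr ⟨v 2, ?_⟩⟩
  · obtain ⟨a, rfl⟩ := mem_span_singleton.mp h
    simp
  · ext i; fin_cases i <;> simp [h]

section

variable {β : K} (γ : K) (hβ : β ≠ 0)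
include hβ

theorem mem_span_e₂_q {v : Fin 3 → K} :
    v ∈ span K {![0, 0, 1], ![γ, -β, 0]} ↔ β * v 0 + γ * v 1 = 0 := by
  refine ⟨fun h => ?_, fun h => mem_span_pair.mpr ⟨v 2, -v 1 / β, ?_⟩⟩
  · obtain ⟨a, b, rfl⟩ := mem_span_pair.mp h
    simp only [Pi.add_apply, Pi.smul_apply, smul_eq_mul, Matrix.cons_val_zero, Matrix.cons_val_one]
    ring
  · ext i
    fin_cases i
    · simp; field_simp; linear_combination -h
    · simp; field_simp
    · simp

theorem mem_span_q {v : Fin 3 → K} :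
    v ∈ span K {![γ, -β, 0]} ↔ β * v 0 + γ * v 1 = 0 ∧ v 2 = 0 := by
  refine ⟨fun h => ?_, fun h => mem_span_singleton.mpr ⟨-v 1 / β, ?_⟩⟩
  · obtain ⟨a, rfl⟩ := mem_span_singleton.mp h
    refine ⟨?_, by simp⟩
    simp only [Pi.smul_apply, smul_eq_mul, Matrix.cons_val_zero, Matrix.cons_val_one]
    ring
  · ext i
    fin_cases i
    · simp; field_simp; linear_combination -h.1
    · simp; field_simp
    · simp [h.2]

end

theorem eval_threeLines (β γ : K) (v : Fin 3 → K) :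
    eval v (threeLines β γ) = v 1 * v 2 * (β * v 0 + γ * v 1) := by
  simp [threeLines]

theorem eval_pderiv_threeLines_eq_zero_iff (β γ : K) (v : Fin 3 → K) :
    (∀ j, eval v (pderiv j (threeLines β γ)) = 0) ↔
      β * (v 1 * v 2) = 0 ∧ v 2 * (β * v 0 + 2 * γ * v 1) = 0 ∧ v 1 * (β * v 0 + γ * v 1) = 0 := by
  have hpd : ∀ j, eval v (pderiv j (threeLines β γ)) =
      ![β * (v 1 * v 2), v 2 * (β * v 0 + 2 * γ * v 1), v 1 * (β * v 0 + γ * v 1)] j := by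
    intro j; fin_cases j <;> simp [threeLines, pderiv_X] <;> ring
  simp only [hpd, Fin.forall_fin_succ, Matrix.cons_val_zero, Matrix.cons_val_succ,
    IsEmpty.forall_iff, and_true]

theorem zeroSet_threeLines_zero {γ : K} (hγ : γ ≠ 0) :
    {v | eval v (threeLines 0 γ) = 0} =
      ↑(span K ({![1, 0, 0], ![0, 0, 1]} : Set (Fin 3 → K))) ∪
        ↑(span K ({![1, 0, 0], ![0, 1, 0]} : Set (Fin 3 → K))) := by
  ext v
  simp [eval_threeLines, mem_span_e₀_e₂, mem_span_e₀_e₁, hγ, or_right_comm]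

theorem singularSet_threeLines_zero {γ : K} (hγ : γ ≠ 0) :
    {v | ∀ j, eval v (pderiv j (threeLines 0 γ)) = 0} =
      ↑(span K ({![1, 0, 0], ![0, 0, 1]} : Set (Fin 3 → K))) := by
  ext v
  simp only [Set.mem_ofPred_eq, eval_pderiv_threeLines_eq_zero_iff, SetLike.mem_coe, mem_span_e₀_e₂]
  refine ⟨fun ⟨_, _, h⟩ => by simpa [hγ] using h, fun h => by simp [h]⟩

theorem zeroSet_threeLines {β : K} (γ : K) (hβ : β ≠ 0) :
    {v | eval v (threeLines β γ) = 0} =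
      ↑(span K ({![1, 0, 0], ![0, 0, 1]} : Set (Fin 3 → K))) ∪
        ↑(span K ({![1, 0, 0], ![0, 1, 0]} : Set (Fin 3 → K))) ∪
          ↑(span K ({![0, 0, 1], ![γ, -β, 0]} : Set (Fin 3 → K))) := by
  ext v
  simp [eval_threeLines, mem_span_e₀_e₂, mem_span_e₀_e₁, mem_span_e₂_q γ hβ]

theorem singularSet_threeLines {β : K} (γ : K) (hβ : β ≠ 0) :
    {v | ∀ j, eval v (pderiv j (threeLines β γ)) = 0} =
      ↑(span K ({![1, 0, 0]} : Set (Fin 3 → K))) ∪ ↑(span K ({![0, 0, 1]} : Set (Fin 3 → K))) ∪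
        ↑(span K ({![γ, -β, 0]} : Set (Fin 3 → K))) := by
  ext v
  simp only [Set.mem_ofPred_eq, eval_pderiv_threeLines_eq_zero_iff, Set.mem_union, SetLike.mem_coe,
    mem_span_e₀, mem_span_e₂, mem_span_q γ hβ]
  constructor
  · rintro ⟨h₁, h₂, h₃⟩
    rcases mul_eq_zero.mp ((mul_eq_zero.mp h₁).resolve_left hβ) with hv₁ | hv₂
    · rw [hv₁] at h₂
      rcases mul_eq_zero.mp h₂ with hv₂ | hv₀
      · exact Or.inl (Or.inl ⟨hv₁, hv₂⟩)
      · exact Or.inl (Or.inr ⟨by simpa [hβ] using hv₀, hv₁⟩)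
    · rcases mul_eq_zero.mp h₃ with hv₁ | hl
      · exact Or.inl (Or.inl ⟨hv₁, hv₂⟩)
      · exact Or.inr ⟨hl, hv₂⟩
  · rintro ((⟨hv₁, hv₂⟩ | ⟨hv₀, hv₁⟩) | ⟨hl, hv₂⟩) <;> simp [*]

end PlaneGeometry

/-- Singular points of the plane cubic `X ∩ M` are the points `m ∈ M` where all directional
derivatives of `P` in directions of `M` vanish. -/
theorem stmt8 {N : ℕ} (P : MvPolynomial (Fin (N + 1)) ℂ) (hP : P.IsHomogeneous 3)
    (s₁ s₂ p : Fin (N + 1) → ℂ)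
    (hs₁ : ∀ i, MvPolynomial.eval s₁ (MvPolynomial.pderiv i P) = 0)
    (hs₂ : ∀ i, MvPolynomial.eval s₂ (MvPolynomial.pderiv i P) = 0)
    (hl₁ : LinearIndependent ℂ ![s₁, p])
    (hl₁X : ∀ v ∈ Submodule.span ℂ {s₁, p}, MvPolynomial.eval v P = 0)
    (hs₂l₁ : s₂ ∉ Submodule.span ℂ {s₁, p})
    (hMX : ∃ m ∈ Submodule.span ℂ {s₁, p, s₂}, MvPolynomial.eval m P ≠ 0) :
    -- case (i): X ∩ M = ⟨s₁s₂⟩ ∪ l₁ with Sing(X ∩ M) = ⟨s₁s₂⟩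
    ({m ∈ (Submodule.span ℂ {s₁, p, s₂} : Set (Fin (N + 1) → ℂ)) |
          MvPolynomial.eval m P = 0}
        = ↑(Submodule.span ℂ {s₁, s₂}) ∪ ↑(Submodule.span ℂ {s₁, p}) ∧
      {m ∈ (Submodule.span ℂ {s₁, p, s₂} : Set (Fin (N + 1) → ℂ)) |
          ∀ w ∈ Submodule.span ℂ {s₁, p, s₂},
            ∑ i, w i * MvPolynomial.eval m (MvPolynomial.pderiv i P) = 0}
        = ↑(Submodule.span ℂ {s₁, s₂}))
    ∨
    -- case (ii): X ∩ M = ⟨s₁s₂⟩ ∪ l₁ ∪ l₂ with l₂ = ⟨s₂, q⟩, q = l₁ ∩ l₂,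
    -- and Sing(X ∩ M) = {s₁, s₂, q}
    (∃ q : Fin (N + 1) → ℂ, q ∈ Submodule.span ℂ {s₁, p} ∧ q ≠ 0 ∧
      s₁ ∉ Submodule.span ℂ {s₂, q} ∧
      {m ∈ (Submodule.span ℂ {s₁, p, s₂} : Set (Fin (N + 1) → ℂ)) |
          MvPolynomial.eval m P = 0}
        = ↑(Submodule.span ℂ {s₁, s₂}) ∪ ↑(Submodule.span ℂ {s₁, p})
            ∪ ↑(Submodule.span ℂ {s₂, q}) ∧
      {m ∈ (Submodule.span ℂ {s₁, p, s₂} : Set (Fin (N + 1) → ℂ)) |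
          ∀ w ∈ Submodule.span ℂ {s₁, p, s₂},
            ∑ i, w i * MvPolynomial.eval m (MvPolynomial.pderiv i P) = 0}
        = ↑(Submodule.span ℂ {s₁}) ∪ ↑(Submodule.span ℂ {s₂})
            ∪ ↑(Submodule.span ℂ {q})) := by
  obtain ⟨L, hL, rfl, rfl, rfl⟩ :=
    exists_injective_linearMap_fin_three (hl₁.triple_of_notMem_span hs₂l₁)
  rw [span_fin_three_eq_range] at hMX ⊢
  have hline : ∀ a b : ℂ, eval ![a, b, 0] (linearSubst L P) = 0 := fun a b => by
    rw [eval_linearSubst]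
    refine hl₁X _ (mem_span_pair.mpr ⟨a, b, ?_⟩)
    rw [← map_smul, ← map_smul, ← map_add]
    congr 1
    ext i; fin_cases i <;> simp
  obtain ⟨β, γ, hQ⟩ := (hP.linearSubst L).exists_eq_threeLines hline
    (fun j => by simp [eval_pderiv_linearSubst, hs₁])
    (fun j => by simp [eval_pderiv_linearSubst, hs₂])
  rw [zeroSet_range_eq_image, singularSet_range_eq_image, hQ]
  simp only [coe_span_pair_map, coe_span_singleton_map]
  rcases eq_or_ne β 0 with rfl | hβ
  · have hγ : γ ≠ 0 := by
      rintro rfl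
      obtain ⟨_, ⟨v, rfl⟩, hv⟩ := hMX
      simp [← eval_linearSubst, hQ, eval_threeLines] at hv
    left
    rw [← Set.image_union, zeroSet_threeLines_zero hγ, singularSet_threeLines_zero hγ]
    exact ⟨rfl, rfl⟩
  · right
    refine ⟨L ![γ, -β, 0], ?_, ?_, ?_, ?_, ?_⟩
    · rw [← SetLike.mem_coe, coe_span_pair_map]
      exact Set.mem_image_of_mem _ (mem_span_e₀_e₁.mpr rfl)
    · rw [Ne, map_eq_zero_iff L hL]
      exact fun h => hβ (by simpa using congrFun h 1)
    · rw [← SetLike.mem_coe, coe_span_pair_map, hL.mem_set_image, SetLike.mem_coe,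
        mem_span_e₂_q γ hβ]
      simpa using hβ
    · rw [coe_span_pair_map, ← Set.image_union, ← Set.image_union, zeroSet_threeLines γ hβ]
    · rw [coe_span_singleton_map, ← Set.image_union, ← Set.image_union,
        singularSet_threeLines γ hβ]
end

section
/- Let X ⊂ P^N be a cubic hypersurface, x ∈ X a smooth point such that the closure F of the Gauss-map fiber through x is a line, and w ∈ Sing(X) ∩ T_x X a point not on F. Then the 2-plane ⟨F, w⟩ spanned by F and w is contained in X; in particular the line ⟨xw⟩ lies in X. -/
open MvPolynomial

/-!
Restricted to the line through `u ∈ F` and `w`, the cubic gives the binary cubic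
`t ↦ P(u + t w)`, whose coefficients are `P(u)`, `D_w P(u)`, `D_u P(w)` and `P(w)`
(the last two read off from `s ↦ P(w + s u)` by homogeneity). The first vanishes because
`F ⊂ X`, the second because `∇P(u)` is proportional to `∇P(x)` (`F` is contracted by the
Gauss map) and `w ∈ T_x X`, and the last two because `w` is singular (with Euler's identity
for `P(w)`). So `P` vanishes on every line joining `w` to a point of `F`.
-/

namespace MvPolynomial

open Polynomial

section CommRing

variable {R σ : Type*} [CommRing R]

noncomputable def lineRestrict (Q : MvPolynomial σ R) (u w : σ → R) : R[X] :=
  aeval (fun i => Polynomial.C (u i) + Polynomial.C (w i) * Polynomial.X) Q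

theorem eval_lineRestrict (Q : MvPolynomial σ R) (u w : σ → R) (t : R) :
    (lineRestrict Q u w).eval t = eval (u + t • w) Q := by
  rw [lineRestrict, ← Polynomial.coe_aeval_eq_eval, comp_aeval_apply]
  change eval _ Q = _
  congr 2
  funext i
  simp only [map_add, map_mul, Polynomial.aeval_C, Polynomial.aeval_X, Pi.add_apply,
    Pi.smul_apply, smul_eq_mul, Algebra.algebraMap_self, RingHom.id_apply]
  ring

theorem coeff_zero_lineRestrict (Q : MvPolynomial σ R) (u w : σ → R) :
    (lineRestrict Q u w).coeff 0 = eval u Q := by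
  simp [coeff_zero_eq_eval_zero, eval_lineRestrict]

theorem IsHomogeneous.eval_smul {Q : MvPolynomial σ R} {n : ℕ} (hQ : Q.IsHomogeneous n)
    (t : R) (v : σ → R) : eval (t • v) Q = t ^ n * eval v Q := by
  rw [Q.as_sum, map_sum, map_sum, Finset.mul_sum]
  refine Finset.sum_congr rfl fun d hd => ?_
  rw [← hQ (mem_support_iff.mp hd)]
  simp only [eval_monomial, Pi.smul_apply, smul_eq_mul, mul_pow, Finsupp.prod_mul]
  simp only [Finsupp.weight_apply, Pi.one_apply, smul_eq_mul, mul_one, Finsupp.sum, Finsupp.prod,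
    Finset.prod_pow_eq_pow_sum]
  ring

theorem derivative_aeval [Fintype σ] [DecidableEq σ] (f : σ → R[X]) (Q : MvPolynomial σ R) :
    derivative (aeval f Q) = ∑ i, aeval f (pderiv i Q) * derivative (f i) := by
  induction Q using MvPolynomial.induction_on with
  | C a => simp
  | add p q hp hq => simp only [map_add, hp, hq, add_mul, Finset.sum_add_distrib]
  | mul_X p j hp =>
    simp only [map_mul, aeval_X, derivative_mul, hp, Derivation.leibniz, pderiv_X, smul_eq_mul,
      map_add, add_mul, Finset.sum_add_distrib, Finset.sum_mul, Pi.single_apply, mul_ite,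
      mul_one, mul_zero, apply_ite (aeval f), map_zero, ite_mul, zero_mul, Finset.sum_ite_eq,
      Finset.mem_univ, if_true]
    rw [add_comm]
    exact congrArg _ (Finset.sum_congr rfl fun _ _ => by ring)

theorem coeff_one_lineRestrict [Fintype σ] [DecidableEq σ] (Q : MvPolynomial σ R)
    (u w : σ → R) : (lineRestrict Q u w).coeff 1 = ∑ i, w i * eval u (pderiv i Q) := by
  have h := congrArg (fun p : R[X] => p.coeff 0) (derivative_aeval
    (fun i => Polynomial.C (u i) + Polynomial.C (w i) * Polynomial.X) Q)
  simp only [coeff_derivative, Nat.cast_zero, zero_add, mul_one, finsetSum_coeff] at h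
  rw [lineRestrict, h]
  refine Finset.sum_congr rfl fun i _ => ?_
  have hd : derivative (Polynomial.C (u i) + Polynomial.C (w i) * Polynomial.X) =
      Polynomial.C (w i) := by simp
  rw [hd, coeff_mul_C, ← lineRestrict, coeff_zero_lineRestrict, mul_comm]

theorem IsHomogeneous.natDegree_aeval_le {Q : MvPolynomial σ R} {n : ℕ}
    (hQ : Q.IsHomogeneous n) {f : σ → R[X]} (hf : ∀ i, (f i).natDegree ≤ 1) :
    (MvPolynomial.aeval f Q).natDegree ≤ n := by
  rw [Q.as_sum, map_sum]
  refine natDegree_sum_le_of_forall_le _ _ fun d hd => ?_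
  rw [aeval_monomial, ← hQ (mem_support_iff.mp hd), Algebra.algebraMap_eq_smul_one, smul_one_mul]
  refine (natDegree_smul_le _ _).trans ((natDegree_prod_le _ _).trans ?_)
  simp only [Finsupp.weight_apply, Pi.one_apply, smul_eq_mul, mul_one, Finsupp.sum]
  exact Finset.sum_le_sum fun i _ => natDegree_pow_le_of_le _ (hf i) |>.trans (by simp)

theorem IsHomogeneous.natDegree_lineRestrict_le {Q : MvPolynomial σ R} {n : ℕ}
    (hQ : Q.IsHomogeneous n) (u w : σ → R) : (lineRestrict Q u w).natDegree ≤ n :=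
  hQ.natDegree_aeval_le fun i => by rw [add_comm]; exact natDegree_linear_le

theorem IsHomogeneous.eval_eq_zero_of_forall_pderiv [NoZeroDivisors R] [Fintype σ]
    [DecidableEq σ] {Q : MvPolynomial σ R} {n : ℕ} (hQ : Q.IsHomogeneous n) (hn : (n : R) ≠ 0)
    {v : σ → R} (hv : ∀ i, eval v (pderiv i Q) = 0) : eval v Q = 0 := by
  have h := congrArg (eval v) hQ.sum_X_mul_pderiv
  simp only [map_sum, map_mul, eval_X, hv, mul_zero, Finset.sum_const_zero, nsmul_eq_mul,
    map_natCast] at h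
  exact (mul_eq_zero.mp h.symm).resolve_left hn

end CommRing

section Field

variable {K σ : Type*} [Field K]

theorem IsHomogeneous.lineRestrict_swap [Infinite K] {Q : MvPolynomial σ K} {n : ℕ}
    (hQ : Q.IsHomogeneous n) (u w : σ → K) :
    lineRestrict Q w u = reflect n (lineRestrict Q u w) := by
  refine eq_of_infinite_eval_eq _ _ ((Set.finite_singleton 0).infinite_compl.mono fun t ht => ?_)
  have ht : t ≠ 0 := ht
  let _ : Invertible t⁻¹ := invertibleOfNonzero (inv_ne_zero ht)
  have h := eval₂_reflect_mul_pow (RingHom.id K) t⁻¹ n _ (hQ.natDegree_lineRestrict_le u w)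
  rw [invOf_eq_inv, inv_inv, Polynomial.eval₂_id, Polynomial.eval₂_id, eval_lineRestrict] at h
  have hscale : w + t • u = t • (u + t⁻¹ • w) := by
    rw [smul_add, smul_smul, mul_inv_cancel₀ ht, one_smul, add_comm]
  rw [Set.mem_ofPred_eq, eval_lineRestrict, hscale, hQ.eval_smul, ← h, inv_pow,
    mul_left_comm, mul_inv_cancel₀ (pow_ne_zero n ht), mul_one]

theorem IsHomogeneous.eval_add_smul_eq_zero_of_cubic [CharZero K] [Fintype σ] [DecidableEq σ]
    {P : MvPolynomial σ K} (hP : P.IsHomogeneous 3) {u w : σ → K} (hu : eval u P = 0)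
    (huw : ∑ i, w i * eval u (pderiv i P) = 0) (hw : ∀ i, eval w (pderiv i P) = 0) (t : K) :
    eval (u + t • w) P = 0 := by
  set g := lineRestrict P u w with hg_def
  have hwP : eval w P = 0 := hP.eval_eq_zero_of_forall_pderiv (by norm_num) hw
  have hswap : ∀ k ≤ 3, g.coeff (3 - k) = (lineRestrict P w u).coeff k := fun k hk => by
    rw [hP.lineRestrict_swap, coeff_reflect, revAt_le hk]
  have hcoeff : ∀ k ≤ 3, g.coeff k = 0 := by
    intro k hk
    interval_cases k
    · rw [coeff_zero_lineRestrict, hu]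
    · rw [coeff_one_lineRestrict, huw]
    · rw [hswap 1 (by norm_num), coeff_one_lineRestrict]
      simp only [hw, mul_zero, Finset.sum_const_zero]
    · rw [hswap 0 (by norm_num), coeff_zero_lineRestrict, hwP]
  have hg : g = 0 := Polynomial.ext fun k => if hk : k ≤ 3 then hcoeff k hk else
    coeff_eq_zero_of_natDegree_lt ((hP.natDegree_lineRestrict_le u w).trans_lt (by omega))
  rw [← eval_lineRestrict, ← hg_def, hg, Polynomial.eval_zero]

end Field

end MvPolynomial

theorem stmt9_general {N : ℕ} (P : MvPolynomial (Fin (N + 1)) ℂ) (hP : P.IsHomogeneous 3)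
    (x z w : Fin (N + 1) → ℂ)
    (hFX : ∀ v ∈ Submodule.span ℂ {x, z}, MvPolynomial.eval v P = 0)
    (hcontract : ∀ v ∈ Submodule.span ℂ {x, z}, ∃ c : ℂ, gradP P v = c • gradP P x)
    (hw : ∀ i, MvPolynomial.eval w (MvPolynomial.pderiv i P) = 0)
    (hwT : ∑ i, w i * MvPolynomial.eval x (MvPolynomial.pderiv i P) = 0) :
    ∀ v ∈ Submodule.span ℂ {x, z, w}, MvPolynomial.eval v P = 0 := by
  intro v hv
  rw [show ({x, z, w} : Set (Fin (N + 1) → ℂ)) = {x, z} ∪ {w} by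
      rw [Set.insert_union, Set.singleton_union],
    Submodule.span_union, Submodule.mem_sup] at hv
  obtain ⟨u, hu, _, hc, rfl⟩ := hv
  obtain ⟨c, rfl⟩ := Submodule.mem_span_singleton.mp hc
  obtain ⟨a, ha⟩ := hcontract u hu
  refine hP.eval_add_smul_eq_zero_of_cubic (hFX u hu) ?_ hw c
  calc ∑ i, w i * eval u (pderiv i P) = a * ∑ i, w i * eval x (pderiv i P) := by
        rw [Finset.mul_sum]
        refine Finset.sum_congr rfl fun i _ => ?_
        rw [show eval u (pderiv i P) = a * eval x (pderiv i P) from congrFun ha i]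
        ring
    _ = 0 := by rw [hwT, mul_zero]

/-- if the closure `F = ⟨x, z⟩` of the Gauss fiber through the
smooth point `x` of the cubic `X = {P = 0}` is a line (with `z ∈ F ∩ Sing X`),
and `w ∈ Sing(X) ∩ T_x X` does not lie on `F`, then the 2-plane `⟨F, w⟩` is
contained in `X`; in particular so is the line `⟨x, w⟩`. -/
theorem stmt9 {N : ℕ} (P : MvPolynomial (Fin (N + 1)) ℂ) (hP : P.IsHomogeneous 3)
    (x z w : Fin (N + 1) → ℂ)
    (hxX : MvPolynomial.eval x P = 0) (hxsm : gradP P x ≠ 0)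
    (hz : ∀ i, MvPolynomial.eval z (MvPolynomial.pderiv i P) = 0)
    (hxz : LinearIndependent ℂ ![x, z])
    (hFX : ∀ v ∈ Submodule.span ℂ {x, z}, MvPolynomial.eval v P = 0)
    (hcontract : ∀ v ∈ Submodule.span ℂ {x, z}, ∃ c : ℂ, gradP P v = c • gradP P x)
    (hw : ∀ i, MvPolynomial.eval w (MvPolynomial.pderiv i P) = 0) (hw0 : w ≠ 0)
    (hwT : ∑ i, w i * MvPolynomial.eval x (MvPolynomial.pderiv i P) = 0)
    (hwF : w ∉ Submodule.span ℂ {x, z}) :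
    ∀ v ∈ Submodule.span ℂ {x, z, w}, MvPolynomial.eval v P = 0 :=
  stmt9_general P hP x z w hFX hcontract hw hwT
end

section
/- Let X ⊂ P^N be a cubic hypersurface and F ⊂ X a line contracted to a point under the Gauss map, with F ∩ Sing(X) = {z}. Let s ∈ Sing(X) be a point with ⟨sz⟩ ⊄ Sing(X). Then F ⊂ T_y X for every y ∈ ⟨sz⟩ \ Sing(X). -/
open MvPolynomial

/-! For a cubic `P`, every `∂ᵢP` is a quadric polarized by the symmetric tensor `cᵢⱼₖ` of third
derivatives of `P`. As `s` and `z` are singular, the gradient at `a s + b z` is `a b w` with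
`wᵢ = ∑ sⱼ zₖ cᵢⱼₖ`, so it suffices that `⟨z, w⟩ = ⟨e, w⟩ = 0`. By symmetry of `c`,
`⟨z, w⟩ = ∑ sᵢ ∑ zⱼ zₖ cᵢⱼₖ = 2 ⟨s, ∇P(z)⟩ = 0` and `⟨e, w⟩ = ⟨s, u⟩` with `uᵢ = ∑ zⱼ eₖ cᵢⱼₖ`.
Along `F` the gradient is `∇P(α z + e) = α u + ∇P(e)`: these vectors all lie on the line spanned
by the image of the Gauss map and never vanish, since `z` is the only singular point of `F`;
hence `u = 0`. -/

theorem eq_zero_of_forall_smul_add_eq_smul {K V : Type*} [Field K] [AddCommGroup V] [Module K V]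
    {p g g₀ : V} (hline : ∀ α : K, ∃ c : K, α • p + g = c • g₀)
    (hne : ∀ α : K, α • p + g ≠ 0) : p = 0 := by
  -- `α = 0` puts `g ≠ 0` on the line `K ∙ g₀`, so `p = μ • g`; if `μ ≠ 0`, `α = -μ⁻¹` gives `0`.
  obtain ⟨c₀, hc₀⟩ := hline 0
  obtain ⟨c₁, hc₁⟩ := hline 1
  rw [zero_smul, zero_add] at hc₀
  have hc₀ne : c₀ ≠ 0 := by
    rintro rfl
    exact hne 0 (by rw [zero_smul, zero_add, hc₀, zero_smul])
  set μ := c₁ / c₀ - 1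
  have hp : p = μ • g := by
    rw [sub_smul, one_smul, eq_sub_iff_add_eq, hc₀, smul_smul, div_mul_cancel₀ _ hc₀ne, ← hc₁,
      hc₀, one_smul]
  rcases eq_or_ne μ 0 with hμ | hμ
  · rw [hp, hμ, zero_smul]
  · exact absurd (by rw [hp, smul_smul, neg_mul, inv_mul_cancel₀ hμ, neg_one_smul, neg_add_cancel])
      (hne (-μ⁻¹))

namespace MvPolynomial

variable {R σ : Type*} [CommRing R]

theorem pderiv_comm (i j : σ) (p : MvPolynomial σ R) :
    pderiv i (pderiv j p) = pderiv j (pderiv i p) := by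
  have : ⁅pderiv i, pderiv j⁆ = (0 : Derivation R (MvPolynomial σ R) (MvPolynomial σ R)) :=
    derivation_ext fun k => by
      classical
      rw [Derivation.commutator_apply]
      simp only [pderiv_X, Pi.single_apply, Derivation.zero_apply]
      split_ifs <;> simp
  rw [← sub_eq_zero, ← Derivation.commutator_apply, this, Derivation.zero_apply]

theorem IsHomogeneous.eval_eq_constantCoeff {φ : MvPolynomial σ R} (h : φ.IsHomogeneous 0)
    (x : σ → R) : eval x φ = constantCoeff φ := by
  rw [totalDegree_eq_zero_iff_eq_C.mp ((totalDegree_zero_iff_isHomogeneous _).mpr h)]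
  simp

/-- The third partial derivatives of `P`, read off as constants: faithful only when they are
constant, i.e. for `P` of degree at most `3`. -/
noncomputable def thirdPDeriv (P : MvPolynomial σ R) (i j k : σ) : R :=
  constantCoeff (pderiv k (pderiv j (pderiv i P)))

theorem thirdPDeriv_swap₁₂ (P : MvPolynomial σ R) (i j k : σ) :
    thirdPDeriv P i j k = thirdPDeriv P j i k := by
  rw [thirdPDeriv, thirdPDeriv, pderiv_comm j i]

theorem thirdPDeriv_swap₂₃ (P : MvPolynomial σ R) (i j k : σ) :
    thirdPDeriv P i j k = thirdPDeriv P i k j := by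
  rw [thirdPDeriv, thirdPDeriv, pderiv_comm k j]

variable [Fintype σ]

theorem IsHomogeneous.sum_mul_eval_pderiv {φ : MvPolynomial σ R} {n : ℕ} (h : φ.IsHomogeneous n)
    (x : σ → R) : ∑ i, x i * eval x (pderiv i φ) = n * eval x φ := by
  simpa [nsmul_eq_mul] using congrArg (eval x) h.sum_X_mul_pderiv

noncomputable def polar (P : MvPolynomial σ R) (i : σ) (x y : σ → R) : R :=
  ∑ j, ∑ k, x j * y k * thirdPDeriv P i j k

theorem polar_comm (P : MvPolynomial σ R) (i : σ) (x y : σ → R) :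
    polar P i x y = polar P i y x := by
  rw [polar, polar, Finset.sum_comm]
  refine Finset.sum_congr rfl fun j _ => Finset.sum_congr rfl fun k _ => ?_
  rw [thirdPDeriv_swap₂₃]
  ring

theorem sum_mul_polar_comm (P : MvPolynomial σ R) (x y u : σ → R) :
    ∑ i, x i * polar P i y u = ∑ i, y i * polar P i x u := by
  simp only [polar, Finset.mul_sum]
  rw [Finset.sum_comm]
  refine Finset.sum_congr rfl fun j _ => Finset.sum_congr rfl fun i _ =>
    Finset.sum_congr rfl fun k _ => ?_
  rw [thirdPDeriv_swap₁₂]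
  ring

theorem polar_smul_add_smul (P : MvPolynomial σ R) (i : σ) (a b : R) (x y : σ → R) :
    polar P i (a • x + b • y) (a • x + b • y)
      = a ^ 2 * polar P i x x + 2 * a * b * polar P i x y + b ^ 2 * polar P i y y := by
  have h : polar P i (a • x + b • y) (a • x + b • y) = a ^ 2 * polar P i x x
      + a * b * polar P i x y + a * b * polar P i y x + b ^ 2 * polar P i y y := by
    simp only [polar, Finset.mul_sum, ← Finset.sum_add_distrib]
    refine Finset.sum_congr rfl fun j _ => Finset.sum_congr rfl fun k _ => ?_
    simp only [Pi.add_apply, Pi.smul_apply, smul_eq_mul]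
    ring
  rw [h, polar_comm P i y x]
  ring

variable {P : MvPolynomial σ R}

theorem IsHomogeneous.eval_pderiv_pderiv (hP : P.IsHomogeneous 3) (i j : σ) (y : σ → R) :
    eval y (pderiv j (pderiv i P)) = ∑ k, y k * thirdPDeriv P i j k := by
  have hL : (pderiv j (pderiv i P)).IsHomogeneous 1 := hP.pderiv.pderiv
  rw [← one_mul (eval y _), ← Nat.cast_one, ← hL.sum_mul_eval_pderiv]
  refine Finset.sum_congr rfl fun k _ => ?_
  rw [hL.pderiv.eval_eq_constantCoeff, thirdPDeriv]

theorem IsHomogeneous.two_mul_eval_pderiv (hP : P.IsHomogeneous 3) (i : σ) (x : σ → R) :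
    2 * eval x (pderiv i P) = polar P i x x := by
  have hQ : (pderiv i P).IsHomogeneous 2 := hP.pderiv
  rw [← Nat.cast_two, ← hQ.sum_mul_eval_pderiv, polar]
  refine Finset.sum_congr rfl fun j _ => ?_
  rw [hP.eval_pderiv_pderiv, Finset.mul_sum]
  refine Finset.sum_congr rfl fun k _ => ?_
  ring

section Field

variable {K : Type*} [Field K] [NeZero (2 : K)] {P : MvPolynomial σ K}

theorem IsHomogeneous.eval_pderiv_smul_add_smul (hP : P.IsHomogeneous 3) {x : σ → K}
    (hx : ∀ j, eval x (pderiv j P) = 0) (a b : K) (y : σ → K) (i : σ) :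
    eval (a • x + b • y) (pderiv i P) = a * b * polar P i x y + b ^ 2 * eval y (pderiv i P) := by
  have h := hP.two_mul_eval_pderiv i (a • x + b • y)
  rw [polar_smul_add_smul, ← hP.two_mul_eval_pderiv, ← hP.two_mul_eval_pderiv, hx] at h
  exact mul_left_cancel₀ (NeZero.ne (2 : K)) (by linear_combination h)

theorem IsHomogeneous.polar_eq_zero_of_gaussContracted (hP : P.IsHomogeneous 3) {z e : σ → K}
    (hz : ∀ i, eval z (pderiv i P) = 0) (hze : LinearIndependent K ![z, e])
    (hcontract : ∃ g₀ : σ → K, ∀ v ∈ Submodule.span K {z, e},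
      ∃ c : K, (fun i => eval v (pderiv i P)) = c • g₀)
    (hsing : ∀ v ∈ Submodule.span K {z, e}, (∀ i, eval v (pderiv i P) = 0) → ∃ c : K, v = c • z)
    (i : σ) : polar P i z e = 0 := by
  obtain ⟨g₀, hg₀⟩ := hcontract
  have hmem (α : K) : α • z + e ∈ Submodule.span K {z, e} :=
    Submodule.mem_span_pair.mpr ⟨α, 1, by rw [one_smul]⟩
  have hgrad (α : K) : (fun i => eval (α • z + e) (pderiv i P))
      = α • (fun i => polar P i z e) + fun i => eval e (pderiv i P) := by
    funext i
    simpa using hP.eval_pderiv_smul_add_smul hz α 1 e i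
  suffices h : (fun i => polar P i z e) = 0 from congrFun h i
  refine eq_zero_of_forall_smul_add_eq_smul (K := K) (g := fun i => eval e (pderiv i P))
    (g₀ := g₀) (fun α => ?_) (fun α hα => ?_)
  · rw [← hgrad]
    exact hg₀ _ (hmem α)
  · obtain ⟨c, hc⟩ := hsing _ (hmem α) fun i => by rw [← hgrad] at hα; exact congrFun hα i
    have h := LinearIndependent.pair_iff.mp hze (α - c) 1 (by rw [sub_smul, one_smul, ← hc]; abel)
    exact one_ne_zero h.2

theorem IsHomogeneous.sum_mul_eval_pderiv_eq_zero (hP : P.IsHomogeneous 3) {s z e : σ → K}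
    (hs : ∀ i, eval s (pderiv i P) = 0) (hz : ∀ i, eval z (pderiv i P) = 0)
    (hze : ∀ i, polar P i z e = 0) :
    ∀ y ∈ Submodule.span K {s, z}, ∀ v ∈ Submodule.span K {z, e},
      ∑ i, v i * eval y (pderiv i P) = 0 := by
  intro y hy v hv
  obtain ⟨a, b, rfl⟩ := Submodule.mem_span_pair.mp hy
  obtain ⟨p, q, rfl⟩ := Submodule.mem_span_pair.mp hv
  have hzz : ∑ i, z i * polar P i s z = 0 := by
    rw [sum_mul_polar_comm]
    simp [← hP.two_mul_eval_pderiv, hz]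
  have hez : ∑ i, e i * polar P i s z = 0 := by
    rw [sum_mul_polar_comm]
    simp [polar_comm P _ e z, hze]
  simp only [hP.eval_pderiv_smul_add_smul hs, hz, mul_zero, add_zero, Pi.add_apply,
    Pi.smul_apply, smul_eq_mul]
  calc ∑ i, (p * z i + q * e i) * (a * b * polar P i s z)
      = a * b * (p * ∑ i, z i * polar P i s z + q * ∑ i, e i * polar P i s z) := by
        simp only [Finset.mul_sum, ← Finset.sum_add_distrib]
        exact Finset.sum_congr rfl fun i _ => by ring
    _ = 0 := by rw [hzz, hez]; ring

end Field

end MvPolynomial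

theorem stmt10_general {N : ℕ} (P : MvPolynomial (Fin (N + 1)) ℂ) (hP : P.IsHomogeneous 3)
    (z e s : Fin (N + 1) → ℂ)
    (hz : ∀ i, MvPolynomial.eval z (MvPolynomial.pderiv i P) = 0)
    (hze : LinearIndependent ℂ ![z, e])
    (hcontract : ∃ x₀ ∈ Submodule.span ℂ {z, e}, gradP P x₀ ≠ 0 ∧
      ∀ v ∈ Submodule.span ℂ {z, e}, ∃ c : ℂ, gradP P v = c • gradP P x₀)
    (hFsing : ∀ v ∈ Submodule.span ℂ {z, e},
      (∀ i, MvPolynomial.eval v (MvPolynomial.pderiv i P) = 0) → ∃ c : ℂ, v = c • z)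
    (hs : ∀ i, MvPolynomial.eval s (MvPolynomial.pderiv i P) = 0) :
    ∀ y ∈ Submodule.span ℂ {s, z}, gradP P y ≠ 0 →
      ∀ v ∈ Submodule.span ℂ {z, e},
        ∑ i, v i * MvPolynomial.eval y (MvPolynomial.pderiv i P) = 0 := by
  obtain ⟨x₀, -, -, hx₀⟩ := hcontract
  have hpolar := hP.polar_eq_zero_of_gaussContracted hz hze ⟨_, hx₀⟩ hFsing
  exact fun y hy _ => hP.sum_mul_eval_pderiv_eq_zero hs hz hpolar y hy

/-- let `F = ⟨z, e⟩ ⊂ X` be a line contracted to a point by the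
Gauss map of the cubic `X = {P = 0}` with `F ∩ Sing(X) = {z}`, and let
`s ∈ Sing(X)` with `⟨s, z⟩ ⊄ Sing(X)`.  Then `F ⊂ T_y X` for every smooth
point `y` of `X` on the line `⟨s, z⟩`. -/
theorem stmt10 {N : ℕ} (P : MvPolynomial (Fin (N + 1)) ℂ) (hP : P.IsHomogeneous 3)
    (z e s : Fin (N + 1) → ℂ)
    (hz : ∀ i, MvPolynomial.eval z (MvPolynomial.pderiv i P) = 0)
    (hze : LinearIndependent ℂ ![z, e])
    (hFX : ∀ v ∈ Submodule.span ℂ {z, e}, MvPolynomial.eval v P = 0)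
    (hcontract : ∃ x₀ ∈ Submodule.span ℂ {z, e}, gradP P x₀ ≠ 0 ∧
      ∀ v ∈ Submodule.span ℂ {z, e}, ∃ c : ℂ, gradP P v = c • gradP P x₀)
    (hFsing : ∀ v ∈ Submodule.span ℂ {z, e},
      (∀ i, MvPolynomial.eval v (MvPolynomial.pderiv i P) = 0) → ∃ c : ℂ, v = c • z)
    (hs : ∀ i, MvPolynomial.eval s (MvPolynomial.pderiv i P) = 0)
    (hsz : LinearIndependent ℂ ![s, z])
    (hszSing : ∃ y ∈ Submodule.span ℂ {s, z},
      ¬ ∀ i, MvPolynomial.eval y (MvPolynomial.pderiv i P) = 0) :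
    ∀ y ∈ Submodule.span ℂ {s, z}, gradP P y ≠ 0 →
      ∀ v ∈ Submodule.span ℂ {z, e},
        ∑ i, v i * MvPolynomial.eval y (MvPolynomial.pderiv i P) = 0 :=
  stmt10_general P hP z e s hz hze hcontract hFsing hs
end

section
/- Let Q_1 ⊂ P^{p+1} = {x_{p+1} = ⋯ = x_{p+q} = y_2 = 0} be the smooth quadric {−x_0 y_1 + x_1^2 + ⋯ + x_p^2 = 0} and Q_2 ⊂ P^{q+1} = {x_1 = ⋯ = x_p = y_1 = 0} the smooth quadric {−x_0 y_2 + x_{p+1}^2 + ⋯ + x_{p+q}^2 = 0} in P^{p+q+2} with coordinates [x_0 : x_1 : ⋯ : x_{p+q} : y_1 : y_2]. Then the join Join(Q_1, Q_2) is the cubic hypersurface defined by −x_0 y_1 y_2 + y_1(x_{p+1}^2 + ⋯ + x_{p+q}^2) + y_2(x_1^2 + ⋯ + x_p^2) = 0. -/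
open MvPolynomial

/-- Index type for coordinates `(x₀, x₁, …, x_p, x_{p+1}, …, x_{p+q}, y₁, y₂)`
of `ℙ^{p+q+2}`. -/
abbrev JoinIdx (p q : ℕ) := Unit ⊕ Fin p ⊕ Fin q ⊕ Unit ⊕ Unit

def jx0 {p q : ℕ} : JoinIdx p q := Sum.inl ()
def jxp {p q : ℕ} (j : Fin p) : JoinIdx p q := Sum.inr (Sum.inl j)
def jxq {p q : ℕ} (j : Fin q) : JoinIdx p q := Sum.inr (Sum.inr (Sum.inl j))
def jy1 {p q : ℕ} : JoinIdx p q := Sum.inr (Sum.inr (Sum.inr (Sum.inl ())))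
def jy2 {p q : ℕ} : JoinIdx p q := Sum.inr (Sum.inr (Sum.inr (Sum.inr ())))

/-- The smooth quadric `Q₁ = {−x₀y₁ + x₁² + ⋯ + x_p² = 0}` in
`ℙ^{p+1} = {x_{p+1} = ⋯ = x_{p+q} = y₂ = 0}` (as an affine cone). -/
def quadOne (p q : ℕ) : Set (JoinIdx p q → ℂ) :=
  {v | (∀ j, v (jxq j) = 0) ∧ v jy2 = 0 ∧
    -(v jx0 * v jy1) + ∑ j, (v (jxp j)) ^ 2 = 0}

/-- The smooth quadric `Q₂ = {−x₀y₂ + x_{p+1}² + ⋯ + x_{p+q}² = 0}` in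
`ℙ^{q+1} = {x₁ = ⋯ = x_p = y₁ = 0}` (as an affine cone). -/
def quadTwo (p q : ℕ) : Set (JoinIdx p q → ℂ) :=
  {v | (∀ j, v (jxp j) = 0) ∧ v jy1 = 0 ∧
    -(v jx0 * v jy2) + ∑ j, (v (jxq j)) ^ 2 = 0}

/-!
Points of the cubic with `y₁ ≠ 0` lie on a line joining the two quadrics: subtract the point
`(A/y₁, x₁, …, x_p, 0, …, 0, y₁, 0)` of `Q₁`, where `A = x₁² + ⋯ + x_p²`, and the cubic equation
divided by `y₁` says exactly that the remainder lies on `Q₂`; symmetrically when `y₂ ≠ 0`.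
A point with `y₁ = y₂ = 0` is the limit of points of the cubic with `y₁ ≠ 0` or `y₂ ≠ 0`,
and the Zariski closure contains the Euclidean closure because polynomials are continuous.
-/

open Filter Topology

section ZariskiClosure

variable {σ : Type*}

lemma isClosed_zLocus (I : Set (MvPolynomial σ ℂ)) : IsClosed (zLocus I) := by
  simp only [zLocus, Set.ofPred_forall]
  exact isClosed_biInter fun f _ => isClosed_eq (continuous_eval f) continuous_const

lemma IsAlg.isClosed {T : Set (σ → ℂ)} (hT : IsAlg T) : IsClosed T := by
  obtain ⟨I, rfl⟩ := hT
  exact isClosed_zLocus I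

@[simp] lemma mem_zLocus_singleton {f : MvPolynomial σ ℂ} {v : σ → ℂ} :
    v ∈ zLocus {f} ↔ eval v f = 0 := by
  simp [zLocus]

lemma zcl_subset_of_isAlg {S T : Set (σ → ℂ)} (hT : IsAlg T) (hST : S ⊆ T) : zcl S ⊆ T :=
  Set.sInter_subset_of_mem ⟨hT, hST⟩

lemma closure_subset_zcl (S : Set (σ → ℂ)) : closure S ⊆ zcl S :=
  Set.subset_sInter fun _ ⟨hT, hST⟩ => closure_minimal hST hT.isClosed

end ZariskiClosure

namespace JoinOfQuadrics

variable {p q : ℕ}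

def joinSet (p q : ℕ) : Set (JoinIdx p q → ℂ) :=
  {v | ∃ a ∈ quadOne p q, ∃ b ∈ quadTwo p q, ∃ s t : ℂ, v = s • a + t • b}

noncomputable def joinCubic (p q : ℕ) : MvPolynomial (JoinIdx p q) ℂ :=
  -(X jx0 * X jy1 * X jy2) + X jy1 * ∑ j, X (jxq j) ^ 2 + X jy2 * ∑ j, X (jxp j) ^ 2

lemma eval_joinCubic (v : JoinIdx p q → ℂ) :
    eval v (joinCubic p q) = -(v jx0 * v jy1 * v jy2) + v jy1 * ∑ j, v (jxq j) ^ 2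
      + v jy2 * ∑ j, v (jxp j) ^ 2 := by
  simp [joinCubic]

def joinVec (c : ℂ) (xp : Fin p → ℂ) (xq : Fin q → ℂ) (u₁ u₂ : ℂ) : JoinIdx p q → ℂ :=
  Sum.elim (fun _ => c) (Sum.elim xp (Sum.elim xq (Sum.elim (fun _ => u₁) (fun _ => u₂))))

section joinVec

variable (c : ℂ) (xp : Fin p → ℂ) (xq : Fin q → ℂ) (u₁ u₂ : ℂ)

@[simp] lemma joinVec_x0 : joinVec c xp xq u₁ u₂ jx0 = c := rfl

@[simp] lemma joinVec_xp (j : Fin p) : joinVec c xp xq u₁ u₂ (jxp j) = xp j := rfl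

@[simp] lemma joinVec_xq (j : Fin q) : joinVec c xp xq u₁ u₂ (jxq j) = xq j := rfl

@[simp] lemma joinVec_y1 : joinVec c xp xq u₁ u₂ jy1 = u₁ := rfl

@[simp] lemma joinVec_y2 : joinVec c xp xq u₁ u₂ jy2 = u₂ := rfl

end joinVec

lemma joinVec_eta (v : JoinIdx p q → ℂ) :
    joinVec (v jx0) (fun j => v (jxp j)) (fun j => v (jxq j)) (v jy1) (v jy2) = v := by
  funext i
  rcases i with ⟨⟩ | j | j | ⟨⟩ | ⟨⟩ <;> rfl

lemma tendsto_joinVec {α : Type*} {l : Filter α} (c : ℂ) (xp : Fin p → ℂ) (xq : Fin q → ℂ)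
    {u₁ u₂ : α → ℂ} {a₁ a₂ : ℂ} (h₁ : Tendsto u₁ l (𝓝 a₁)) (h₂ : Tendsto u₂ l (𝓝 a₂)) :
    Tendsto (fun e => joinVec c xp xq (u₁ e) (u₂ e)) l (𝓝 (joinVec c xp xq a₁ a₂)) := by
  refine tendsto_pi_nhds.2 fun i => ?_
  rcases i with ⟨⟩ | j | j | ⟨⟩ | ⟨⟩
  exacts [tendsto_const_nhds, tendsto_const_nhds, tendsto_const_nhds, h₁, h₂]

lemma joinSet_subset_zLocus : joinSet p q ⊆ zLocus {joinCubic p q} := by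
  rintro _ ⟨a, ⟨ha_xq, ha_y2, ha⟩, b, ⟨hb_xp, hb_y1, hb⟩, s, t, rfl⟩
  simp only [mem_zLocus_singleton, eval_joinCubic, Pi.add_apply,
    Pi.smul_apply, smul_eq_mul, ha_xq, ha_y2, hb_xp, hb_y1, mul_zero, add_zero, zero_add,
    mul_pow, ← Finset.mul_sum]
  linear_combination (s ^ 2 * t * b jy2) * ha + (s * t ^ 2 * a jy1) * hb

lemma mem_joinSet_of_y1_ne_zero {v : JoinIdx p q → ℂ} (hv : eval v (joinCubic p q) = 0)
    (h₁ : v jy1 ≠ 0) : v ∈ joinSet p q := by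
  set a : JoinIdx p q → ℂ :=
    joinVec ((∑ j, v (jxp j) ^ 2) / v jy1) (fun j => v (jxp j)) 0 (v jy1) 0
  have ha : a ∈ quadOne p q := ⟨fun _ => rfl, rfl, by simp [a]; field_simp; ring⟩
  have hb : v - a ∈ quadTwo p q := by
    refine ⟨fun _ => by simp [a], by simp [a], ?_⟩
    rw [eval_joinCubic] at hv
    simp only [a, Pi.sub_apply, joinVec_x0, joinVec_y2, joinVec_xq, Pi.zero_apply, sub_zero]
    field_simp
    linear_combination hv
  exact ⟨a, ha, v - a, hb, 1, 1, by simp⟩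

lemma mem_joinSet_of_y2_ne_zero {v : JoinIdx p q → ℂ} (hv : eval v (joinCubic p q) = 0)
    (h₂ : v jy2 ≠ 0) : v ∈ joinSet p q := by
  set b : JoinIdx p q → ℂ :=
    joinVec ((∑ j, v (jxq j) ^ 2) / v jy2) 0 (fun j => v (jxq j)) 0 (v jy2)
  have hb : b ∈ quadTwo p q := ⟨fun _ => rfl, rfl, by simp [b]; field_simp; ring⟩
  have ha : v - b ∈ quadOne p q := by
    refine ⟨fun _ => by simp [b], by simp [b], ?_⟩
    rw [eval_joinCubic] at hv
    simp only [b, Pi.sub_apply, joinVec_x0, joinVec_y1, joinVec_xp, Pi.zero_apply, sub_zero]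
    field_simp
    linear_combination hv
  exact ⟨v - b, ha, b, hb, 1, 1, by simp⟩

lemma joinVec_y_zero_mem_closure (c : ℂ) (xp : Fin p → ℂ) (xq : Fin q → ℂ) :
    joinVec c xp xq 0 0 ∈ closure (joinSet p q) := by
  set A := ∑ j, xp j ^ 2 with hA_def
  set B := ∑ j, xq j ^ 2 with hB_def
  by_cases hA : A = 0
  · refine mem_closure_of_tendsto (b := 𝓝[≠] 0)
      ((tendsto_joinVec c xp xq tendsto_const_nhds tendsto_id).mono_left nhdsWithin_le_nhds) ?_
    filter_upwards [self_mem_nhdsWithin] with e he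
    refine mem_joinSet_of_y2_ne_zero ?_ he
    simp [eval_joinCubic, ← hA_def, hA]
  -- the curve `y₁ = e`, `y₂ = e B / (c e - A)` stays on the cubic
  have hden : ∀ᶠ e in 𝓝 (0 : ℂ), c * e - A ≠ 0 :=
    ContinuousAt.eventually_ne (by fun_prop) (by simpa using hA)
  have hy₂ : Tendsto (fun e : ℂ => e * B / (c * e - A)) (𝓝 0) (𝓝 0) := by
    have : ContinuousAt (fun e : ℂ => e * B / (c * e - A)) 0 :=
      ContinuousAt.div (by fun_prop) (by fun_prop) (by simpa using hA)
    simpa using this.tendsto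
  refine mem_closure_of_tendsto (b := 𝓝[≠] 0)
    ((tendsto_joinVec c xp xq tendsto_id hy₂).mono_left nhdsWithin_le_nhds) ?_
  filter_upwards [self_mem_nhdsWithin, nhdsWithin_le_nhds hden] with e he hde
  refine mem_joinSet_of_y1_ne_zero ?_ he
  simp only [eval_joinCubic, joinVec_x0, joinVec_y1, joinVec_y2, joinVec_xp, joinVec_xq, id_eq,
    ← hA_def, ← hB_def]
  field_simp
  ring

lemma zLocus_subset_closure_joinSet : zLocus {joinCubic p q} ⊆ closure (joinSet p q) := by
  intro v hv
  rw [mem_zLocus_singleton] at hv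
  by_cases h₁ : v jy1 = 0
  · by_cases h₂ : v jy2 = 0
    · rw [← joinVec_eta v, h₁, h₂]
      exact joinVec_y_zero_mem_closure _ _ _
    · exact subset_closure (mem_joinSet_of_y2_ne_zero hv h₂)
  · exact subset_closure (mem_joinSet_of_y1_ne_zero hv h₁)

end JoinOfQuadrics

theorem stmt11_general (p q : ℕ) :
    zcl {v : JoinIdx p q → ℂ | ∃ a ∈ quadOne p q, ∃ b ∈ quadTwo p q,
        ∃ s t : ℂ, v = s • a + t • b}
      = {v : JoinIdx p q → ℂ |
          -(v jx0 * v jy1 * v jy2) + v jy1 * ∑ j, (v (jxq j)) ^ 2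
            + v jy2 * ∑ j, (v (jxp j)) ^ 2 = 0} := by
  have hcubic : {v : JoinIdx p q → ℂ | -(v jx0 * v jy1 * v jy2) + v jy1 * ∑ j, (v (jxq j)) ^ 2
      + v jy2 * ∑ j, (v (jxp j)) ^ 2 = 0} = zLocus {JoinOfQuadrics.joinCubic p q} := by
    ext v
    simp [JoinOfQuadrics.eval_joinCubic]
  rw [hcubic]
  exact (zcl_subset_of_isAlg ⟨_, rfl⟩ JoinOfQuadrics.joinSet_subset_zLocus).antisymm
    (JoinOfQuadrics.zLocus_subset_closure_joinSet.trans (closure_subset_zcl _))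

/-- the join of the two quadrics `Q₁`, `Q₂` (the closure of the
union of all lines joining a point of `Q₁` to a point of `Q₂`) is the cubic
hypersurface `{−x₀y₁y₂ + y₁(x_{p+1}²+⋯+x_{p+q}²) + y₂(x₁²+⋯+x_p²) = 0}`. -/
theorem stmt11 (p q : ℕ) (hp : 0 < p) (hq : 0 < q) :
    zcl {v : JoinIdx p q → ℂ | ∃ a ∈ quadOne p q, ∃ b ∈ quadTwo p q,
        ∃ s t : ℂ, v = s • a + t • b}
      = {v : JoinIdx p q → ℂ |
          -(v jx0 * v jy1 * v jy2) + v jy1 * ∑ j, (v (jxq j)) ^ 2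
            + v jy2 * ∑ j, (v (jxp j)) ^ 2 = 0} :=
  stmt11_general p q
end
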